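/- For a behavior tree T0 whose root is the full tree (so I0 = X), the sets {Ωi : i a leaf} together with S0 and F0 form a partition of the state space X. -/
import Mathlib


/-- Return status of a behavior tree: Running, Success, or Failure. -/
inductive BTStatus where
  | Run | Succ | Fail
deriving DecidableEq

/-- Direction to a child in a binary interior node. -/
inductive BTDir where
  | left | right
deriving DecidableEq

/-- Behavior trees: leaves carry a controller `u : X → U` and a return-status
function `r : X → {R, S, F}`; interior nodes are binary Sequence and Fallback. -/
inductive BTree (X U : Type*) where
  | leaf (u : X → U) (r : X → BTStatus)
  | seq (t1 t2 : BTree X U)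
  | fall (t1 t2 : BTree X U)

namespace BTree
variable {X U : Type*}

/-- Return-status function of a tree (Sequence: run second child iff first
succeeds; Fallback: run second child iff first fails). -/
def ret : BTree X U → X → BTStatus
  | .leaf _ r, x => r x
  | .seq t1 t2, x => if t1.ret x = .Succ then t2.ret x else t1.ret x
  | .fall t1 t2, x => if t1.ret x = .Fail then t2.ret x else t1.ret x

/-- Controller of a tree. -/
def ctrl : BTree X U → X → U
  | .leaf u _, x => u x
  | .seq t1 t2, x => if t1.ret x = .Succ then t2.ctrl x else t1.ctrl x
  | .fall t1 t2, x => if t1.ret x = .Fail then t2.ctrl x else t1.ctrl x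

/-- Success region. -/
def Sreg (t : BTree X U) : Set X := {x | t.ret x = .Succ}
/-- Failure region. -/
def Freg (t : BTree X U) : Set X := {x | t.ret x = .Fail}
/-- Running region. -/
def Rreg (t : BTree X U) : Set X := {x | t.ret x = .Run}

/-- The subtree at a given path (if the path is valid). -/
def sub : BTree X U → List BTDir → Option (BTree X U)
  | t, [] => some t
  | .leaf _ _, _ :: _ => none
  | .seq t1 _, .left :: p => t1.sub p
  | .seq _ t2, .right :: p => t2.sub p
  | .fall t1 _, .left :: p => t1.sub p
  | .fall _ t2, .right :: p => t2.sub p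

/-- Influence region of the subtree at a path, given the influence region `I0`
of the root: the leftmost child inherits its parent's influence region; a right
child of a Sequence (resp. Fallback) gets its left sibling's influence region
intersected with the sibling's success (resp. failure) region. -/
def infl : BTree X U → Set X → List BTDir → Set X
  | _, I0, [] => I0
  | .leaf _ _, I0, _ :: _ => I0
  | .seq t1 _, I0, .left :: p => t1.infl I0 p
  | .seq t1 t2, I0, .right :: p => t2.infl (I0 ∩ t1.Sreg) p
  | .fall t1 _, I0, .left :: p => t1.infl I0 p
  | .fall t1 t2, I0, .right :: p => t2.infl (I0 ∩ t1.Freg) p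

/-- Operating region `Ωᵢ = Iᵢ ∩ Rᵢ` of the subtree at a path (root influence
region `I0 = X`); empty for an invalid path. -/
def opReg (t : BTree X U) (p : List BTDir) : Set X :=
  match t.sub p with
  | some s => t.infl Set.univ p ∩ s.Rreg
  | none => ∅

/-- Paths to all the leaves of a tree. -/
def leafPaths : BTree X U → List (List BTDir)
  | .leaf _ _ => [[]]
  | .seq t1 t2 => t1.leafPaths.map (.left :: ·) ++ t2.leafPaths.map (.right :: ·)
  | .fall t1 t2 => t1.leafPaths.map (.left :: ·) ++ t2.leafPaths.map (.right :: ·)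

end BTree

namespace BTree
variable {X U : Type*}

/-- Path to the currently active leaf. -/
def activePath : BTree X U → X → List BTDir
  | .leaf _ _, _ => []
  | .seq t1 t2, x => if t1.ret x = .Succ then .right :: t2.activePath x
      else .left :: t1.activePath x
  | .fall t1 t2, x => if t1.ret x = .Fail then .right :: t2.activePath x
      else .left :: t1.activePath x

/-- Generalized operating region with arbitrary root influence region. -/
def opRegI (t : BTree X U) (I0 : Set X) (p : List BTDir) : Set X :=
  match t.sub p with
  | some s => t.infl I0 p ∩ s.Rreg
  | none => ∅

lemma opReg_eq (t : BTree X U) (p : List BTDir) : t.opReg p = t.opRegI Set.univ p := rfl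

lemma activePath_mem (t : BTree X U) (x : X) : t.activePath x ∈ t.leafPaths := by
  induction t with
  | leaf u r => simp [activePath, leafPaths]
  | seq t1 t2 ih1 ih2 =>
    simp only [activePath, leafPaths, List.mem_append, List.mem_map]
    by_cases h : t1.ret x = .Succ
    · exact Or.inr ⟨_, ih2, by simp [h]⟩
    · exact Or.inl ⟨_, ih1, by simp [h]⟩
  | fall t1 t2 ih1 ih2 =>
    simp only [activePath, leafPaths, List.mem_append, List.mem_map]
    by_cases h : t1.ret x = .Fail
    · exact Or.inr ⟨_, ih2, by simp [h]⟩
    · exact Or.inl ⟨_, ih1, by simp [h]⟩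

lemma mem_opRegI_iff (t : BTree X U) (x : X) :
    ∀ I0 : Set X, ∀ p ∈ t.leafPaths,
      (x ∈ t.opRegI I0 p ↔ x ∈ I0 ∧ t.ret x = .Run ∧ p = t.activePath x) := by
  induction t with
  | leaf u r =>
    intro I0 p hp
    simp only [leafPaths, List.mem_singleton] at hp
    subst hp
    simp [opRegI, sub, infl, Rreg, activePath, ret, Set.mem_inter_iff, Set.mem_setOf_eq]
  | seq t1 t2 ih1 ih2 =>
    intro I0 p hp
    simp only [leafPaths, List.mem_append, List.mem_map] at hp
    rcases hp with ⟨q, hq, rfl⟩ | ⟨q, hq, rfl⟩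
    · have : (BTree.seq t1 t2).opRegI I0 (.left :: q) = t1.opRegI I0 q := by
        simp only [opRegI, sub, infl]
      rw [this, ih1 I0 q hq]
      constructor
      · rintro ⟨hI, hr, rfl⟩
        have hns : t1.ret x ≠ .Succ := by simp [hr]
        exact ⟨hI, by simp [ret, hns, hr], by simp [activePath, hns]⟩
      · rintro ⟨hI, hr, hp⟩
        by_cases hs : t1.ret x = .Succ
        · simp [activePath, hs] at hp
        · have hp2 : q = t1.activePath x := by simpa [activePath, hs] using hp
          refine ⟨hI, ?_, hp2⟩
          simpa [ret, hs] using hr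
    · have : (BTree.seq t1 t2).opRegI I0 (.right :: q) = t2.opRegI (I0 ∩ t1.Sreg) q := by
        simp only [opRegI, sub, infl]
      rw [this, ih2 _ q hq]
      constructor
      · rintro ⟨⟨hI, hS⟩, hr, rfl⟩
        have hs : t1.ret x = .Succ := hS
        exact ⟨hI, by simp [ret, hs, hr], by simp [activePath, hs]⟩
      · rintro ⟨hI, hr, hp⟩
        by_cases hs : t1.ret x = .Succ
        · simp only [activePath, hs, if_pos, List.cons.injEq] at hp
          refine ⟨⟨hI, hs⟩, ?_, hp.2⟩
          simpa [ret, hs] using hr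
        · simp [activePath, hs] at hp
  | fall t1 t2 ih1 ih2 =>
    intro I0 p hp
    simp only [leafPaths, List.mem_append, List.mem_map] at hp
    rcases hp with ⟨q, hq, rfl⟩ | ⟨q, hq, rfl⟩
    · have : (BTree.fall t1 t2).opRegI I0 (.left :: q) = t1.opRegI I0 q := by
        simp only [opRegI, sub, infl]
      rw [this, ih1 I0 q hq]
      constructor
      · rintro ⟨hI, hr, rfl⟩
        have hns : t1.ret x ≠ .Fail := by simp [hr]
        exact ⟨hI, by simp [ret, hns, hr], by simp [activePath, hns]⟩
      · rintro ⟨hI, hr, hp⟩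
        by_cases hs : t1.ret x = .Fail
        · simp [activePath, hs] at hp
        · have hp2 : q = t1.activePath x := by simpa [activePath, hs] using hp
          refine ⟨hI, ?_, hp2⟩
          simpa [ret, hs] using hr
    · have : (BTree.fall t1 t2).opRegI I0 (.right :: q) = t2.opRegI (I0 ∩ t1.Freg) q := by
        simp only [opRegI, sub, infl]
      rw [this, ih2 _ q hq]
      constructor
      · rintro ⟨⟨hI, hF⟩, hr, rfl⟩
        have hs : t1.ret x = .Fail := hF
        exact ⟨hI, by simp [ret, hs, hr], by simp [activePath, hs]⟩
      · rintro ⟨hI, hr, hp⟩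
        by_cases hs : t1.ret x = .Fail
        · simp only [activePath, hs, if_pos, List.cons.injEq] at hp
          refine ⟨⟨hI, hs⟩, ?_, hp.2⟩
          simpa [ret, hs] using hr
        · simp [activePath, hs] at hp

lemma mem_opReg_iff (t : BTree X U) (x : X) (p : List BTDir) (hp : p ∈ t.leafPaths) :
    x ∈ t.opReg p ↔ t.ret x = .Run ∧ p = t.activePath x := by
  rw [opReg_eq, mem_opRegI_iff t x Set.univ p hp]
  simp

end BTree

/-- for a behavior tree whose root is the full tree (`I0 = X`), the
leaf operating regions `{Ωi}` together with `S0` and `F0` partition the state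
space `X`: all these sets are pairwise disjoint and their union is `X`. -/
theorem leaf_opRegs_S0_F0_partition {X U : Type*} (t : BTree X U) :
    (∀ p ∈ t.leafPaths, ∀ q ∈ t.leafPaths, p ≠ q → t.opReg p ∩ t.opReg q = ∅) ∧
    (∀ p ∈ t.leafPaths, t.opReg p ∩ t.Sreg = ∅) ∧
    (∀ p ∈ t.leafPaths, t.opReg p ∩ t.Freg = ∅) ∧
    t.Sreg ∩ t.Freg = ∅ ∧
    (⋃ p ∈ t.leafPaths, t.opReg p) ∪ t.Sreg ∪ t.Freg = Set.univ := by
  constructor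
  · intro p hp q hq hne
    ext x
    simp only [Set.mem_inter_iff, Set.mem_empty_iff_false, iff_false]
    rintro ⟨h1, h2⟩
    rw [BTree.mem_opReg_iff t x p hp] at h1
    rw [BTree.mem_opReg_iff t x q hq] at h2
    exact hne (h1.2.trans h2.2.symm)
  refine ⟨?_, ?_, ?_, ?_⟩
  · intro p hp
    ext x
    simp only [Set.mem_inter_iff, Set.mem_empty_iff_false, iff_false]
    rintro ⟨h1, h2⟩
    rw [BTree.mem_opReg_iff t x p hp] at h1
    rw [BTree.Sreg, Set.mem_setOf_eq] at h2
    rw [h1.1] at h2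
    exact BTStatus.noConfusion h2
  · intro p hp
    ext x
    simp only [Set.mem_inter_iff, Set.mem_empty_iff_false, iff_false]
    rintro ⟨h1, h2⟩
    rw [BTree.mem_opReg_iff t x p hp] at h1
    rw [BTree.Freg, Set.mem_setOf_eq] at h2
    rw [h1.1] at h2
    exact BTStatus.noConfusion h2
  · ext x
    simp only [Set.mem_inter_iff, Set.mem_empty_iff_false, iff_false, BTree.Sreg,
      BTree.Freg, Set.mem_setOf_eq]
    rintro ⟨h1, h2⟩
    rw [h1] at h2
    exact BTStatus.noConfusion h2
  · ext x
    simp only [Set.mem_union, Set.mem_iUnion, Set.mem_univ, iff_true, BTree.Sreg,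
      BTree.Freg, Set.mem_setOf_eq]
    rcases h : t.ret x with _ | _ | _
    · left; left
      exact ⟨t.activePath x, t.activePath_mem x,
        (BTree.mem_opReg_iff t x _ (t.activePath_mem x)).2 ⟨h, rfl⟩⟩
    · left; right; rfl
    · right; rfl
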